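/- Fix g ≥ 1 and even L ≥ 2. The map sending I_{2g} + L·[[A, B],[C, D]] ∈ Sp_{2g}(ℤ, L) (block decomposition into g×g blocks) to the vector in (ℤ/2)^{2g} whose entries are the diagonal entries of B and C reduced mod 2 is a surjective group homomorphism Sp_{2g}(ℤ, L) → (ℤ/2)^{2g}, whose kernel is the subgroup Sp_{2g}(ℤ, L, 2L) of matrices [[A', B'],[C', D']] ∈ Sp_{2g}(ℤ, L) whose blocks B' and C' have all diagonal entries divisible by 2L. -/

import Mathlib

open Matrix

abbrev Idx (g : ℕ) := Fin g ⊕ Fin g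

/-- The standard symplectic matrix `Ω_g = [[0, I_g], [-I_g, 0]]`. -/
def Omega (g : ℕ) (R : Type*) [CommRing R] : Matrix (Idx g) (Idx g) R :=
  Matrix.fromBlocks 0 1 (-1) 0

/-- `X` is a symplectic matrix: `Xᵀ Ω X = Ω`. -/
def IsSymp (g : ℕ) (R : Type*) [CommRing R] (X : Matrix (Idx g) (Idx g) R) : Prop :=
  Xᵀ * Omega g R * X = Omega g R

/-- `M` is congruent to the identity mod `L`. -/
def IsLevel (g L : ℕ) (M : Matrix (Idx g) (Idx g) ℤ) : Prop :=
  M.map (Int.cast : ℤ → ZMod L) = 1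

/-- For `M = I + L·[[A,B],[C,D]] ∈ Sp_{2g}(ℤ, L)`, the vector in `(ℤ/2)^{2g}` of the diagonal
entries of `B` and of `C`, reduced mod 2. -/
def igusaMap (g L : ℕ) (M : Matrix (Idx g) (Idx g) ℤ) : Idx g → ZMod 2 := fun idx =>
  match idx with
  | Sum.inl i =>
      ((((M - 1).map (fun x => x / (L : ℤ))) (Sum.inl i) (Sum.inr i) : ℤ) : ZMod 2)
  | Sum.inr i =>
      ((((M - 1).map (fun x => x / (L : ℤ))) (Sum.inr i) (Sum.inl i) : ℤ) : ZMod 2)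

/-! Every level-`L` matrix is `1 + L • X`, and `igusaMap` reads off the diagonals of the two
off-diagonal blocks of `X` mod 2. Since `(1 + L X)(1 + L Y) = 1 + L (X + Y + L X Y)` and `L` is
even, the map is additive. The symplectic transvections `1 + L • [[0, diag b], [0, 0]]` and
`1 + L • [[0, 0], [diag c, 0]]` realise every vector, and `2L ∣ L x` iff `x` is even. -/

theorem one_add_smul_mul_one_add_smul {A : Type*} [Ring A] (n : ℤ) (x y : A) :
    (1 + n • x) * (1 + n • y) = 1 + n • (x + y + n • (x * y)) := by
  simp only [add_mul, mul_add, one_mul, mul_one, smul_mul_smul_comm, smul_add, mul_smul, add_assoc]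

theorem isLevel_iff_exists_eq_one_add_smul {g L : ℕ} {M : Matrix (Idx g) (Idx g) ℤ} :
    IsLevel g L M ↔ ∃ X : Matrix (Idx g) (Idx g) ℤ, M = 1 + (L : ℤ) • X := by
  constructor
  · intro h
    have hdvd (i j : Idx g) : (L : ℤ) ∣ (M - 1) i j := by
      rw [← ZMod.intCast_zmod_eq_zero_iff_dvd]
      have := congr_fun₂ h i j
      rw [map_apply] at this
      rcases eq_or_ne i j with rfl | _ <;> simp_all [one_apply]
    choose X hX using hdvd
    exact ⟨Matrix.of X, by ext i j; simp [← hX]⟩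
  · rintro ⟨X, rfl⟩
    ext i j
    simp only [map_apply, Matrix.add_apply, Matrix.smul_apply, smul_eq_mul, Int.cast_add,
      Int.cast_mul, Int.cast_natCast, ZMod.natCast_self, zero_mul, add_zero]
    rcases eq_or_ne i j with rfl | _ <;> simp [one_apply, *]

theorem IsLevel.mul {g L : ℕ} {M N : Matrix (Idx g) (Idx g) ℤ} (hM : IsLevel g L M)
    (hN : IsLevel g L N) : IsLevel g L (M * N) := by
  obtain ⟨X, rfl⟩ := isLevel_iff_exists_eq_one_add_smul.mp hM
  obtain ⟨Y, rfl⟩ := isLevel_iff_exists_eq_one_add_smul.mp hN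
  exact isLevel_iff_exists_eq_one_add_smul.mpr ⟨_, one_add_smul_mul_one_add_smul _ X Y⟩

theorem IsSymp.mul {g : ℕ} {R : Type*} [CommRing R] {M N : Matrix (Idx g) (Idx g) R}
    (hM : IsSymp g R M) (hN : IsSymp g R N) : IsSymp g R (M * N) := by
  rw [IsSymp] at *
  calc (M * N)ᵀ * Omega g R * (M * N) = Nᵀ * (Mᵀ * Omega g R * M) * N := by
        simp only [transpose_mul, Matrix.mul_assoc]
    _ = Omega g R := by rw [hM, hN]

theorem isSymp_one_add_fromBlocks_upper {g : ℕ} {R : Type*} [CommRing R]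
    {S : Matrix (Fin g) (Fin g) R} (hS : S.IsSymm) : IsSymp g R (1 + fromBlocks 0 S 0 0) := by
  rw [← fromBlocks_one, fromBlocks_add]
  simp [IsSymp, Omega, fromBlocks_transpose, fromBlocks_multiply, hS.eq]

theorem isSymp_one_add_fromBlocks_lower {g : ℕ} {R : Type*} [CommRing R]
    {S : Matrix (Fin g) (Fin g) R} (hS : S.IsSymm) : IsSymp g R (1 + fromBlocks 0 0 S 0) := by
  rw [← fromBlocks_one, fromBlocks_add]
  simp [IsSymp, Omega, fromBlocks_transpose, fromBlocks_multiply, hS.eq]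

def offBlockDiagModTwo (g : ℕ) : Matrix (Idx g) (Idx g) ℤ →+ (Idx g → ZMod 2) where
  toFun X := Sum.elim (fun i => (X (.inl i) (.inr i) : ZMod 2))
    (fun i => (X (.inr i) (.inl i) : ZMod 2))
  map_zero' := by ext (i | i) <;> simp
  map_add' X Y := by ext (i | i) <;> simp

theorem offBlockDiagModTwo_eq_zero_iff {g : ℕ} {X : Matrix (Idx g) (Idx g) ℤ} :
    offBlockDiagModTwo g X = 0 ↔
      ∀ i : Fin g, 2 ∣ X (.inl i) (.inr i) ∧ 2 ∣ X (.inr i) (.inl i) := by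
  simp [offBlockDiagModTwo, funext_iff, Sum.forall, ZMod.intCast_zmod_eq_zero_iff_dvd, forall_and]

theorem offBlockDiagModTwo_smul_of_two_dvd {g : ℕ} {n : ℤ} (hn : 2 ∣ n)
    (X : Matrix (Idx g) (Idx g) ℤ) : offBlockDiagModTwo g (n • X) = 0 := by
  rw [offBlockDiagModTwo_eq_zero_iff]
  exact fun i => ⟨hn.mul_right _, hn.mul_right _⟩

theorem igusaMap_one_add_smul {g L : ℕ} (hL : L ≠ 0) (X : Matrix (Idx g) (Idx g) ℤ) :
    igusaMap g L (1 + (L : ℤ) • X) = offBlockDiagModTwo g X := by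
  have hL' : (L : ℤ) ≠ 0 := by exact_mod_cast hL
  ext (i | i) <;>
    simp only [igusaMap, offBlockDiagModTwo, add_sub_cancel_left, map_apply, Matrix.smul_apply,
      smul_eq_mul, Int.mul_ediv_cancel_left _ hL', AddMonoidHom.coe_mk, ZeroHom.coe_mk,
      Sum.elim_inl, Sum.elim_inr]

theorem igusaMap_mul {g L : ℕ} (hL : L ≠ 0) (heven : 2 ∣ L) {M N : Matrix (Idx g) (Idx g) ℤ}
    (hM : IsLevel g L M) (hN : IsLevel g L N) :
    igusaMap g L (M * N) = igusaMap g L M + igusaMap g L N := by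
  obtain ⟨X, rfl⟩ := isLevel_iff_exists_eq_one_add_smul.mp hM
  obtain ⟨Y, rfl⟩ := isLevel_iff_exists_eq_one_add_smul.mp hN
  rw [one_add_smul_mul_one_add_smul, igusaMap_one_add_smul hL, igusaMap_one_add_smul hL,
    igusaMap_one_add_smul hL, map_add, map_add,
    offBlockDiagModTwo_smul_of_two_dvd (Int.natCast_dvd_natCast.mpr heven), add_zero]

theorem igusaMap_eq_zero_iff {g L : ℕ} (hL : L ≠ 0) {M : Matrix (Idx g) (Idx g) ℤ}
    (hM : IsLevel g L M) :
    igusaMap g L M = 0 ↔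
      ∀ i : Fin g, (2 * L : ℤ) ∣ M (.inl i) (.inr i) ∧
        (2 * L : ℤ) ∣ M (.inr i) (.inl i) := by
  obtain ⟨X, rfl⟩ := isLevel_iff_exists_eq_one_add_smul.mp hM
  have hL' : (L : ℤ) ≠ 0 := by exact_mod_cast hL
  rw [igusaMap_one_add_smul hL, offBlockDiagModTwo_eq_zero_iff]
  simp only [Matrix.add_apply, Matrix.smul_apply, smul_eq_mul, ne_eq, reduceCtorEq,
    not_false_eq_true, one_apply_ne, zero_add, mul_comm (2 : ℤ), mul_dvd_mul_iff_left hL']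

theorem exists_isSymp_isLevel_igusaMap_eq {g L : ℕ} (hL : L ≠ 0) (heven : 2 ∣ L)
    (v : Idx g → ZMod 2) :
    ∃ M : Matrix (Idx g) (Idx g) ℤ,
      IsSymp g ℤ M ∧ IsLevel g L M ∧ igusaMap g L M = v := by
  set b : Fin g → ℤ := fun i => (v (.inl i)).cast
  set c : Fin g → ℤ := fun i => (v (.inr i)).cast
  set U : Matrix (Idx g) (Idx g) ℤ := 1 + (L : ℤ) • fromBlocks 0 (diagonal b) 0 0
  set W : Matrix (Idx g) (Idx g) ℤ := 1 + (L : ℤ) • fromBlocks 0 0 (diagonal c) 0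
  have hU : IsLevel g L U := isLevel_iff_exists_eq_one_add_smul.mpr ⟨_, rfl⟩
  have hW : IsLevel g L W := isLevel_iff_exists_eq_one_add_smul.mpr ⟨_, rfl⟩
  have hUW : IsSymp g ℤ (U * W) := by
    refine IsSymp.mul ?_ ?_
    · simpa [U, fromBlocks_smul] using
        isSymp_one_add_fromBlocks_upper ((isSymm_diagonal b).smul (L : ℤ))
    · simpa [W, fromBlocks_smul] using
        isSymp_one_add_fromBlocks_lower ((isSymm_diagonal c).smul (L : ℤ))
  refine ⟨U * W, hUW, hU.mul hW, ?_⟩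
  rw [igusaMap_mul hL heven hU hW, igusaMap_one_add_smul hL, igusaMap_one_add_smul hL]
  ext (i | i) <;> simp [offBlockDiagModTwo, b, c]

theorem igusaMap_surjective_hom_general (g L : ℕ) (hL : 2 ≤ L) (heven : 2 ∣ L) :
    -- homomorphism
    (∀ M N : Matrix (Idx g) (Idx g) ℤ, IsSymp g ℤ M → IsSymp g ℤ N →
      IsLevel g L M → IsLevel g L N →
      igusaMap g L (M * N) = igusaMap g L M + igusaMap g L N) ∧
    -- surjectivity
    (∀ v : Idx g → ZMod 2, ∃ M : Matrix (Idx g) (Idx g) ℤ,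
      IsSymp g ℤ M ∧ IsLevel g L M ∧ igusaMap g L M = v) ∧
    -- the kernel is `Sp_{2g}(ℤ, L, 2L)`
    (∀ M : Matrix (Idx g) (Idx g) ℤ, IsSymp g ℤ M → IsLevel g L M →
      (igusaMap g L M = 0 ↔
        ∀ i : Fin g, ((2 * L : ℤ) ∣ M (Sum.inl i) (Sum.inr i)) ∧
          ((2 * L : ℤ) ∣ M (Sum.inr i) (Sum.inl i)))) := by
  have hL0 : L ≠ 0 := by omega
  exact ⟨fun _ _ _ _ hM hN => igusaMap_mul hL0 heven hM hN,
    exists_isSymp_isLevel_igusaMap_eq hL0 heven,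
    fun _ _ hM => igusaMap_eq_zero_iff hL0 hM⟩

/-- For even `L`, the map `I + L·[[A,B],[C,D]] ↦ (diag B, diag C) mod 2` is a surjective
group homomorphism `Sp_{2g}(ℤ, L) → (ℤ/2)^{2g}` with kernel `Sp_{2g}(ℤ, L, 2L)`, the set of
level-`L` matrices whose off-diagonal blocks have diagonal entries divisible by `2L`. -/
theorem igusaMap_surjective_hom (g L : ℕ) (hg : 1 ≤ g) (hL : 2 ≤ L) (heven : 2 ∣ L) :
    -- homomorphism
    (∀ M N : Matrix (Idx g) (Idx g) ℤ, IsSymp g ℤ M → IsSymp g ℤ N →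
      IsLevel g L M → IsLevel g L N →
      igusaMap g L (M * N) = igusaMap g L M + igusaMap g L N) ∧
    -- surjectivity
    (∀ v : Idx g → ZMod 2, ∃ M : Matrix (Idx g) (Idx g) ℤ,
      IsSymp g ℤ M ∧ IsLevel g L M ∧ igusaMap g L M = v) ∧
    -- the kernel is `Sp_{2g}(ℤ, L, 2L)`
    (∀ M : Matrix (Idx g) (Idx g) ℤ, IsSymp g ℤ M → IsLevel g L M →
      (igusaMap g L M = 0 ↔
        ∀ i : Fin g, ((2 * L : ℤ) ∣ M (Sum.inl i) (Sum.inr i)) ∧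
          ((2 * L : ℤ) ∣ M (Sum.inr i) (Sum.inl i)))) :=
  igusaMap_surjective_hom_general g L hL heven
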